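/- With Y(z) := ∑_{k≥1} B^r_k·B_{2(k−1)}(r)·z^k, the identity ∑_{k≥1} B_{2(k−1)}(r)·z^k = z·ψ_μ(Y(z)) holds as formal power series, where ψ_μ(Y) = 1 + ∑_{k≥1} μ_{k+1}·Y(z)^k is the formal composition. -/

import Mathlib

open scoped Classical

/-- Rooted plane trees: a tree is a root together with the ordered list of
the subtrees hanging from its children (left-to-right order). -/
inductive PTree where
  | node : List PTree → PTree

namespace PTree

instance : Inhabited PTree := ⟨.node []⟩

/-- number of nodes -/
def size : PTree → ℕ
  | node l => 1 + (l.attach.map (fun c => size c.1)).sum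
decreasing_by
  have := List.sizeOf_lt_of_mem c.2
  simp only [node.sizeOf_spec]; omega

/-- tree factorial: `t! = |t| * ∏ᵢ tᵢ!` -/
def tfact : PTree → ℕ
  | node l => size (node l) * (l.attach.map (fun c => tfact c.1)).prod
decreasing_by
  have := List.sizeOf_lt_of_mem c.2
  simp only [node.sizeOf_spec]; omega

/-- Shape equivalence: two plane trees have the same underlying rooted tree,
i.e. there is a bijection between children matching shape-equivalent subtrees. -/
inductive ShapeEq : PTree → PTree → Prop
  | node {l₁ l₂ : List PTree} (e : Fin l₁.length ≃ Fin l₂.length)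
      (h : ∀ i, ShapeEq (l₁.get i) (l₂.get (e i))) :
      ShapeEq (node l₁) (node l₂)

lemma size_pos (t : PTree) : 0 < t.size := by
  cases t; simp [size]

/-- The plane tree encoded by a parent function `p : Fin n → Fin n`:
`shapeAux n p fuel i` is the subtree rooted at node `i`, whose children are the
`j` with `p j = i` and `i < j` (ordered by label). `fuel = n` suffices. -/
def shapeAux (n : ℕ) (p : Fin n → Fin n) : ℕ → Fin n → PTree
  | 0, _ => node []
  | fuel+1, i =>
      node (((List.finRange n).filter (fun j => decide (p j = i ∧ i < j))).map
        (shapeAux n p fuel))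

/-- The plane tree encoded by a parent function (rooted at node `0`). -/
def shapeOf {n : ℕ} (p : Fin n → Fin n) : PTree :=
  if h : 0 < n then shapeAux n p n ⟨0, h⟩ else node []

/-- `alpha t` is the number of rooted labelled (increasing) trees of shape `t`:
labelled trees are encoded by their parent function, the root carrying the
label `0` and labels increasing away from the root. -/
noncomputable def alpha (t : PTree) : ℕ :=
  Nat.card {p : Fin t.size → Fin t.size //
    p ⟨0, t.size_pos⟩ = ⟨0, t.size_pos⟩ ∧
    (∀ j : Fin t.size, 0 < (j : ℕ) → (p j : ℕ) < j) ∧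
    ShapeEq (shapeOf p) t}

/-- `kappa t` is the number of rooted plane trees of shape `t`. -/
noncomputable def kappa (t : PTree) : ℕ := Nat.card {t' : PTree // ShapeEq t' t}

/-- symmetry factor: `σ(B₊(t₁^{n₁},…,t_m^{n_m})) = ∏ᵢ nᵢ! σ(tᵢ)^{nᵢ}`. -/
noncomputable def sym : PTree → ℕ
  | node l =>
      (∏ j : Fin l.length,
        (l.take ((j : ℕ) + 1)).countP (fun c => decide (ShapeEq c (l.get j)))) *
      (l.attach.map (fun c => sym c.1)).prod
decreasing_by
  have := List.sizeOf_lt_of_mem c.2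
  simp only [node.sizeOf_spec]; omega

/-- elementary differentials: `δ_• = 1`, `δ_t = k! ψ_k ∏ᵢ δ_{tᵢ}`. -/
def delta (ψ : ℕ → ℝ) : PTree → ℝ
  | node l =>
      (Nat.factorial l.length : ℝ) * ψ l.length *
      (l.attach.map (fun c => delta ψ c.1)).prod
decreasing_by
  have := List.sizeOf_lt_of_mem c.2
  simp only [node.sizeOf_spec]; omega

/-- bare Green function with weights `B`: `B(t) = B_{|t|} ∏ᵢ B(tᵢ)`. -/
def bare (B : ℕ → ℝ) : PTree → ℝ
  | node l => B (size (node l)) * (l.attach.map (fun c => bare B c.1)).prod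
decreasing_by
  have := List.sizeOf_lt_of_mem c.2
  simp only [node.sizeOf_spec]; omega

/-- `wt ψ t = ∏_{v ∈ t} ψ (d v)` where `d v` is the outdegree of `v`. -/
def wt (ψ : ℕ → ℝ) : PTree → ℝ
  | node l => ψ l.length * (l.attach.map (fun c => wt ψ c.1)).prod
decreasing_by
  have := List.sizeOf_lt_of_mem c.2
  simp only [node.sizeOf_spec]; omega

/-- `nodeProd B t = ∏_{w ≠ root} B_{|t_w|}`, product over non-root nodes of `t`. -/
def nodeProd (B : ℕ → ℝ) : PTree → ℝ
  | node l => (l.attach.map (fun c => B (size c.1) * nodeProd B c.1)).prod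
decreasing_by
  have := List.sizeOf_lt_of_mem c.2
  simp only [node.sizeOf_spec]; omega

/-- `R` is a set of representatives of the rooted trees with `n` nodes:
every plane tree of size `n` is shape-equivalent to exactly one member of `R`. -/
def IsTransversal (n : ℕ) (R : Finset PTree) : Prop :=
  (∀ t ∈ R, size t = n) ∧
  ∀ t : PTree, size t = n → ∃! u, u ∈ R ∧ ShapeEq t u

end PTree

/-! Deleting the root of a plane tree with `n + 1` nodes and `j` children leaves an ordered
forest of `j` trees with `n` nodes in all, so if `Y` is the generating function of trees weighted
by a multiplicative weight `G`, then `[zⁿ] Yʲ` is the sum over trees with `n + 1` nodes and root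
degree `j` of the product of `G` over the root's subtrees. The weight
`∏_{w ≠ root} B_{|t_w|} · ∏_v μ_{d(v)+1}` of a tree factors exactly in this way, as `μ_{j+1}` times
the product over the root's subtrees `s` of `B_{|s|}` times the weight of `s`; summing over the root
degree gives `B_{2n} = ∑_j μ_{j+1} [zⁿ] Yʲ`, i.e. the coefficient of `zⁿ⁺¹` in `z ψ_μ(Y)`. -/

namespace PTree

def children : PTree → List PTree
  | node l => l

@[simp] lemma children_node (l : List PTree) : (node l).children = l := rfl

lemma size_node (l : List PTree) : size (node l) = 1 + (l.map size).sum := by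
  rw [size]; simp

lemma wt_node (ψ : ℕ → ℝ) (l : List PTree) :
    wt ψ (node l) = ψ l.length * (l.map (wt ψ)).prod := by
  rw [wt]; simp

lemma nodeProd_node (B : ℕ → ℝ) (l : List PTree) :
    nodeProd B (node l) = (l.map fun c => B c.size * nodeProd B c).prod := by
  rw [nodeProd]; simp

lemma length_children_lt_size (t : PTree) : t.children.length < t.size := by
  obtain ⟨l⟩ := t
  have h := (l.map size).length_le_sum_of_one_le <| by
    simp only [List.mem_map]
    rintro _ ⟨c, -, rfl⟩
    exact size_pos c
  rw [List.length_map] at h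
  rw [size_node, children_node]
  omega

lemma size_eq_one_iff {t : PTree} : t.size = 1 ↔ t = node [] := by
  obtain ⟨_ | ⟨a, l⟩⟩ := t
  · simp [size_node]
  · have := size_pos a; simp [size_node]; omega

def graft (c u : PTree) : PTree := node (c :: u.children)

@[simp] lemma children_graft (c u : PTree) : (graft c u).children = c :: u.children := rfl

lemma size_graft (c u : PTree) : (graft c u).size = c.size + u.size := by
  obtain ⟨l⟩ := u
  simp only [graft, size_node, children_node, List.map_cons, List.sum_cons]
  omega

lemma graft_head!_children {t : PTree} (h : t.children ≠ []) :
    graft t.children.head! (node t.children.tail) = t := by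
  obtain ⟨l⟩ := t
  exact congrArg node (List.cons_head!_tail h)

lemma nodeProd_mul_wt (B ψ : ℕ → ℝ) (t : PTree) :
    nodeProd B t * wt ψ t = ψ t.children.length *
      (t.children.map fun c => B c.size * (nodeProd B c * wt ψ c)).prod := by
  obtain ⟨l⟩ := t
  simp only [nodeProd_node, wt_node, children_node, ← mul_assoc, List.prod_map_mul]
  ring

def IsSizeEnumeration (F : ℕ → Finset PTree) : Prop :=
  ∀ n t, t ∈ F n ↔ size t = n

namespace IsSizeEnumeration

open Finset.HasAntidiagonal

variable {F : ℕ → Finset PTree}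

lemma mem_iff (hF : IsSizeEnumeration F) {n : ℕ} {t : PTree} : t ∈ F n ↔ t.size = n :=
  hF n t

lemma eq_empty_zero (hF : IsSizeEnumeration F) : F 0 = ∅ :=
  Finset.eq_empty_of_forall_notMem fun t ht => (size_pos t).ne' ((hF 0 t).1 ht)

lemma eq_singleton_one (hF : IsSizeEnumeration F) : F 1 = {node []} := by
  ext t; rw [hF.mem_iff, Finset.mem_singleton, size_eq_one_iff]

lemma filter_children_eq_nil (hF : IsSizeEnumeration F) (n : ℕ) :
    {t ∈ F (n + 1) | t.children.length = 0} = if n = 0 then {node []} else ∅ := by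
  ext ⟨l⟩
  simp only [Finset.mem_filter, hF.mem_iff, children_node, List.length_eq_zero_iff]
  split_ifs with hn <;> constructor
  · rintro ⟨-, rfl⟩; simp
  · simp only [Finset.mem_singleton, node.injEq]; rintro rfl; simp [size_node, hn]
  · rintro ⟨hs, rfl⟩
    simp only [size_node, List.map_nil, List.sum_nil, add_zero, Nat.right_eq_add] at hs
    omega
  · simp

/-- Grafting is a bijection from (planted tree, tree with root degree `j`) pairs onto the trees
with root degree `j + 1`. -/
lemma sum_filter_children_length_succ {R : Type*} [AddCommMonoid R] (hF : IsSizeEnumeration F)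
    (g : PTree → R) (n j : ℕ) :
    ∑ t ∈ F (n + 1) with t.children.length = j + 1, g t =
      ∑ p ∈ antidiagonal n, ∑ c ∈ F p.1,
        ∑ u ∈ F (p.2 + 1) with u.children.length = j, g (graft c u) := by
  simp only [Finset.sum_sigma']
  symm
  refine Finset.sum_bij' (fun x _ => graft x.2.1 x.2.2)
    (fun t _ => ⟨(t.children.head!.size, n - t.children.head!.size), t.children.head!,
      node t.children.tail⟩) ?_ ?_ ?_ ?_ (fun _ _ => rfl)
  · rintro ⟨⟨a, b⟩, c, u⟩ hx
    simp only [Finset.mem_sigma, mem_antidiagonal, Finset.mem_filter, hF.mem_iff] at hx ⊢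
    obtain ⟨rfl, hc, hu, rfl⟩ := hx
    refine ⟨?_, by simp⟩
    rw [size_graft]; omega
  · rintro ⟨l⟩ ht
    simp only [Finset.mem_sigma, mem_antidiagonal, Finset.mem_filter, hF.mem_iff] at ht ⊢
    obtain ⟨hs, hl⟩ := ht
    obtain ⟨a, l, rfl⟩ := List.exists_cons_of_length_eq_add_one hl
    have := size_pos a
    simp only [children_node, List.length_cons, Nat.add_right_cancel_iff] at hl
    simp only [size_node, List.map_cons, List.sum_cons] at hs
    simp only [children_node, List.head!_cons, List.tail_cons, size_node, hl, and_true, true_and]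
    omega
  · rintro ⟨⟨a, b⟩, c, u⟩ hx
    simp only [Finset.mem_sigma, mem_antidiagonal, Finset.mem_filter, hF.mem_iff] at hx
    obtain ⟨hab, rfl, -⟩ := hx
    obtain ⟨l⟩ := u
    simp only [graft, children_node, List.head!_cons, List.tail_cons, Sigma.mk.injEq,
      Prod.mk.injEq, true_and, heq_eq_eq, and_true]
    omega
  · intro t ht
    simp only [Finset.mem_filter] at ht
    exact graft_head!_children (List.ne_nil_of_length_eq_add_one ht.2)

theorem coeff_pow {R : Type*} [CommSemiring R] (hF : IsSizeEnumeration F) (G : PTree → R)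
    (j n : ℕ) :
    PowerSeries.coeff n ((PowerSeries.mk fun m => ∑ t ∈ F m, G t) ^ j) =
      ∑ t ∈ F (n + 1) with t.children.length = j, (t.children.map G).prod := by
  induction j generalizing n with
  | zero =>
    rw [pow_zero, PowerSeries.coeff_one, hF.filter_children_eq_nil]
    split_ifs <;> simp
  | succ j ih =>
    rw [pow_succ', PowerSeries.coeff_mul, hF.sum_filter_children_length_succ]
    refine Finset.sum_congr rfl fun p _ => ?_
    simp only [PowerSeries.coeff_mk, ih, Finset.sum_mul_sum, children_graft, List.map_cons,
      List.prod_cons]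

theorem sum_nodeProd_mul_wt_eq (hF : IsSizeEnumeration F) (B ψ : ℕ → ℝ) (n : ℕ) :
    ∑ t ∈ F (n + 1), nodeProd B t * wt ψ t =
      ∑ j ∈ Finset.range (n + 1), ψ j * PowerSeries.coeff n
        ((PowerSeries.mk fun m => ∑ t ∈ F m, B t.size * (nodeProd B t * wt ψ t)) ^ j) := by
  have hdeg : ∀ t ∈ F (n + 1), t.children.length ∈ Finset.range (n + 1) := fun t ht =>
    Finset.mem_range.2 (hF.mem_iff.1 ht ▸ length_children_lt_size t)
  rw [← Finset.sum_fiberwise_of_maps_to hdeg]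
  refine Finset.sum_congr rfl fun j _ => ?_
  rw [hF.coeff_pow, Finset.mul_sum]
  refine Finset.sum_congr rfl fun t ht => ?_
  rw [nodeProd_mul_wt, (Finset.mem_filter.1 ht).2]

end IsSizeEnumeration

end PTree

open PTree in
theorem trace_series_fixed_point_general
    (μm : ℕ → ℝ) (hμ1 : μm 1 = 1)
    (Br : ℕ → ℝ)
    (F : ℕ → Finset PTree) (hF : ∀ n (t : PTree), t ∈ F n ↔ size t = n)
    (B2 : ℕ → ℝ) (hB20 : B2 0 = 1)
    (hB2 : ∀ k : ℕ, 1 ≤ k → B2 k =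
      ∑ t ∈ F (k + 1), nodeProd Br t * wt (fun d => μm (d + 1)) t)
    (Y : PowerSeries ℝ)
    (hY : Y = PowerSeries.mk (fun k => if k = 0 then 0 else Br k * B2 (k - 1)))
    (c : ℕ → ℝ)
    (hc : ∀ n, c n = ∑ j ∈ Finset.range (n + 1),
      (if j = 0 then 1 else μm (j + 1)) * PowerSeries.coeff n (Y ^ j)) :
    PowerSeries.mk (fun k => if k = 0 then 0 else B2 (k - 1)) =
      PowerSeries.X * PowerSeries.mk c := by
  set ψ : ℕ → ℝ := fun d => μm (d + 1)
  have hF : IsSizeEnumeration F := hF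
  have hB2_eq : ∀ n, B2 n = ∑ t ∈ F (n + 1), nodeProd Br t * wt ψ t := by
    rintro (_ | n)
    · simp [hB20, hF.eq_singleton_one, nodeProd_node, wt_node, ψ, hμ1]
    · exact hB2 _ n.succ_pos
  have hY_eq : Y = PowerSeries.mk fun m => ∑ t ∈ F m, Br t.size * (nodeProd Br t * wt ψ t) := by
    rw [hY]
    ext (_ | m)
    · simp [hF.eq_empty_zero]
    · rw [PowerSeries.coeff_mk, PowerSeries.coeff_mk, if_neg m.succ_ne_zero, Nat.add_sub_cancel,
        hB2_eq, Finset.mul_sum]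
      exact Finset.sum_congr rfl fun t ht => by rw [hF.mem_iff.1 ht]
  ext (_ | n)
  · simp
  · rw [PowerSeries.coeff_succ_X_mul, PowerSeries.coeff_mk, PowerSeries.coeff_mk, hc,
      if_neg n.succ_ne_zero, Nat.add_sub_cancel, hB2_eq, hF.sum_nodeProd_mul_wt_eq, hY_eq]
    refine Finset.sum_congr rfl fun j _ => ?_
    rcases j with _ | j <;> simp [ψ, hμ1]

open PTree in
/-- With `Y(z) = ∑_{k≥1} B^r_k·B_{2(k−1)}(r)·zᵏ`, the identity
`∑_{k≥1} B_{2(k−1)}(r)·zᵏ = z·ψ_μ(Y(z))` holds as formal power series,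
where `ψ_μ(z) = 1 + ∑_{k≥1} μ_{k+1} zᵏ` and `c n = [zⁿ](ψ_μ∘Y)` (the
composition is well defined since `Y` has zero constant term). -/
theorem trace_series_fixed_point
    (β : ℝ) (hβ : 0 < β) (r : ℕ → ℝ) (μm : ℕ → ℝ) (hμ1 : μm 1 = 1)
    (Br : ℕ → ℝ) (hBrdef : ∀ k : ℕ, 1 ≤ k → Br k = β ^ 2 * r (2 * k - 1))
    (F : ℕ → Finset PTree) (hF : ∀ n (t : PTree), t ∈ F n ↔ size t = n)
    (B2 : ℕ → ℝ) (hB20 : B2 0 = 1)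
    (hB2 : ∀ k : ℕ, 1 ≤ k → B2 k =
      ∑ t ∈ F (k + 1), nodeProd Br t * wt (fun d => μm (d + 1)) t)
    (Y : PowerSeries ℝ)
    (hY : Y = PowerSeries.mk (fun k => if k = 0 then 0 else Br k * B2 (k - 1)))
    (c : ℕ → ℝ)
    (hc : ∀ n, c n = ∑ j ∈ Finset.range (n + 1),
      (if j = 0 then 1 else μm (j + 1)) * PowerSeries.coeff n (Y ^ j)) :
    PowerSeries.mk (fun k => if k = 0 then 0 else B2 (k - 1)) =
      PowerSeries.X * PowerSeries.mk c :=
  trace_series_fixed_point_general μm hμ1 Br F hF B2 hB20 hB2 Y hY c hc
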